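/- Let U be a Hopf algebra over a commutative ring k with antipode S, B the monad (−) ⊗_k U and D the comonad U ⊗_k (−) on k-Mod. The maps θ_X(u ⊗ x ⊗ v) = S(v_{(2)})u ⊗ x ⊗ v_{(1)} define a mixed distributive law θ : B ⟶ D. -/

import Mathlib

open TensorProduct

universe u

namespace BohmStefan

variable (k : Type u) [CommRing k]
variable (U : Type u) [Ring U] [HopfAlgebra k U]

/-- The map `v ↦ S(v₍₂₎) ⊗ v₍₁₎`. -/
noncomputable def antipodeSwap : U →ₗ[k] U ⊗[k] U :=
  (TensorProduct.comm k U U).toLinearMap ∘ₗ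
    (TensorProduct.map LinearMap.id (HopfAlgebra.antipode (R := k))) ∘ₗ
      Coalgebra.comul

/-- The mixed distributive law `θ_X : (U ⊗ X) ⊗ U ⟶ U ⊗ (X ⊗ U)`,
`u ⊗ x ⊗ v ↦ S(v₍₂₎)u ⊗ x ⊗ v₍₁₎`. -/
noncomputable def thetaMap (X : Type u) [AddCommGroup X] [Module k X] :
    (U ⊗[k] X) ⊗[k] U →ₗ[k] U ⊗[k] (X ⊗[k] U) :=
  (TensorProduct.map
      ((LinearMap.mul' k U) ∘ₗ (TensorProduct.comm k U U).toLinearMap) LinearMap.id) ∘ₗ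
    (tensorTensorTensorComm k U X U U).toLinearMap ∘ₗ
      (TensorProduct.map LinearMap.id (antipodeSwap k U))

/-- The multiplication `μ_P : (P ⊗ U) ⊗ U ⟶ P ⊗ U` of the monad `B = (−) ⊗ U`. -/
noncomputable def muMap (P : Type u) [AddCommGroup P] [Module k P] :
    (P ⊗[k] U) ⊗[k] U →ₗ[k] P ⊗[k] U :=
  (TensorProduct.map LinearMap.id (LinearMap.mul' k U)) ∘ₗ
    (TensorProduct.assoc k P U U).toLinearMap

/-- The unit `η_P : P ⟶ P ⊗ U`, `p ↦ p ⊗ 1`, of the monad `B = (−) ⊗ U`. -/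
noncomputable def etaMap (P : Type u) [AddCommGroup P] [Module k P] :
    P →ₗ[k] P ⊗[k] U :=
  (TensorProduct.mk k P U).flip 1

/-- The comultiplication `Δ_P : U ⊗ P ⟶ U ⊗ (U ⊗ P)` of the comonad `D = U ⊗ (−)`. -/
noncomputable def deltaMap (P : Type u) [AddCommGroup P] [Module k P] :
    U ⊗[k] P →ₗ[k] U ⊗[k] (U ⊗[k] P) :=
  (TensorProduct.assoc k U U P).toLinearMap ∘ₗ
    (TensorProduct.map Coalgebra.comul LinearMap.id)

/-- The counit `ε_P : U ⊗ P ⟶ P` of the comonad `D = U ⊗ (−)`. -/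
noncomputable def epsMap (P : Type u) [AddCommGroup P] [Module k P] :
    U ⊗[k] P →ₗ[k] P :=
  (TensorProduct.lid k P).toLinearMap ∘ₗ
    (TensorProduct.map (Coalgebra.counit (R := k)) LinearMap.id)

end BohmStefan

/-!
Writing `θ((u ⊗ x) ⊗ v)` as a Sweedler sum over a representation of `Δ v`, each axiom becomes an
identity in `U`: compatibility with `μ` is `S(vw) = S(w) S(v)` together with multiplicativity of
`Δ`, with `η` is `S 1 = 1`, with `ε` is `ε ∘ S = ε`, and compatibility with `Δ` is
`Δ(S v₍₂₎) ⊗ v₍₁₎ = S(v₍₃₎) ⊗ S(v₍₂₎) ⊗ v₍₁₎`, i.e. coassociativity plus the fact that `S` is an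
anti-coalgebra map, `Δ(S v) = S(v₍₂₎) ⊗ S(v₍₁₎)`.

For the latter, both sides are convolution inverses of `Δ` in `Hom(U, U ⊗ U)`. With the two
algebra inclusions `ιₗ, ιᵣ : U → U ⊗ U` one has `Δ = ιₗ * ιᵣ` and
`(S ⊗ S) ∘ τ ∘ Δ = (ιᵣ ∘ S) * (ιₗ ∘ S)`, and `(h ∘ S) * h = h ∘ (S * id) = 1` for every algebra
map `h`, so the product telescopes to `1`.
-/

open TensorProduct Coalgebra HopfAlgebra WithConv

namespace Coalgebra

variable {R A ι : Type*} [CommSemiring R] [AddCommMonoid A] [Module R A] [Coalgebra R A] {a : A}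

lemma sum_counit_right_smul (𝓡 : Repr R a ι) :
    ∑ i ∈ 𝓡.index, counit (R := R) (𝓡.right i) • 𝓡.left i = a := by
  simpa only [map_sum, _root_.TensorProduct.rid_tmul, one_smul] using
    congr(_root_.TensorProduct.rid R A $(sum_tmul_counit_eq 𝓡))

end Coalgebra

namespace HopfAlgebra

variable {R A B ι : Type*} {κ : ι → Type*} [CommSemiring R] [Semiring A] [HopfAlgebra R A]
  [Semiring B] [Algebra R B]

lemma algHom_comp_antipode_convMul_self (h : A →ₐ[R] B) :
    toConv (h.toLinearMap ∘ₗ antipode R) * toConv h.toLinearMap = 1 := by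
  have := LinearMap.algHom_comp_convMul_distrib h (toConv (antipode R)) (toConv LinearMap.id)
  rw [LinearMap.antipode_mul_id] at this
  ext a
  simpa using congr($this a).symm

lemma toConv_comul_eq_mul :
    toConv (comul (R := R) (A := A)) =
      toConv (Algebra.TensorProduct.includeLeft : A →ₐ[R] A ⊗[R] A).toLinearMap *
        toConv (Algebra.TensorProduct.includeRight : A →ₐ[R] A ⊗[R] A).toLinearMap := by
  ext a
  simp [(ℛ R a).convMul_apply, ← (ℛ R a).eq]

lemma toConv_map_antipode_comm_comul_eq_mul :
    toConv (map (antipode R) (antipode R) ∘ₗ (TensorProduct.comm R A A).toLinearMap ∘ₗ comul) =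
      toConv ((Algebra.TensorProduct.includeRight : A →ₐ[R] A ⊗[R] A).toLinearMap ∘ₗ antipode R) *
        toConv ((Algebra.TensorProduct.includeLeft : A →ₐ[R] A ⊗[R] A).toLinearMap ∘ₗ
          antipode R) := by
  ext a
  simp [(ℛ R a).convMul_apply, ← (ℛ R a).eq]

lemma comul_comp_antipode :
    comul ∘ₗ antipode R =
      map (antipode R) (antipode R) ∘ₗ (TensorProduct.comm R A A).toLinearMap ∘ₗ
        comul (A := A) := by
  symm
  apply toConv_injective
  refine left_inv_eq_right_inv ?_ LinearMap.comul_right_inv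
  rw [toConv_map_antipode_comm_comul_eq_mul, toConv_comul_eq_mul, mul_assoc,
    ← mul_assoc _ (toConv Algebra.TensorProduct.includeLeft.toLinearMap),
    algHom_comp_antipode_convMul_self, one_mul, algHom_comp_antipode_convMul_self]

lemma comul_antipode (a : A) :
    comul (antipode R a) = map (antipode R) (antipode R) (TensorProduct.comm R A A (comul a)) :=
  congr($comul_comp_antipode a)

lemma sum_comul_antipode_right_tmul_left {a : A} (r : Repr R a ι)
    (a₁ : (i : ι) → Repr R (r.left i) (κ i)) :
    ∑ i ∈ r.index, comul (antipode R (r.right i)) ⊗ₜ[R] r.left i =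
      ∑ i ∈ r.index, ∑ j ∈ (a₁ i).index,
        (antipode R (r.right i) ⊗ₜ[R] antipode R ((a₁ i).right j)) ⊗ₜ[R] (a₁ i).left j := by
  have coassoc := congr(map (map (antipode R) (antipode R) ∘ₗ
      (TensorProduct.comm R A A).toLinearMap) LinearMap.id
    (TensorProduct.comm R A (A ⊗[R] A) $(sum_tmul_tmul_eq r a₁ (fun i => ℛ R (r.right i)))))
  simp only [map_sum, comm_tmul, map_tmul, LinearMap.comp_apply, LinearEquiv.coe_coe,
    LinearMap.id_apply] at coassoc
  rw [coassoc]
  simp [comul_antipode, ← (ℛ R (r.right _)).eq, sum_tmul]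

end HopfAlgebra

namespace BohmStefan

variable {k : Type u} [CommRing k] {U : Type u} [Ring U] [HopfAlgebra k U]

local notation "S" => HopfAlgebra.antipode (R := k) (A := U)

lemma thetaMap_tmul {X : Type u} [AddCommGroup X] [Module k X] (u : U) (x : X) {v : U}
    {ι : Type*} (r : Repr k v ι) :
    thetaMap k U X ((u ⊗ₜ x) ⊗ₜ v) = ∑ i ∈ r.index, (S (r.right i) * u) ⊗ₜ (x ⊗ₜ r.left i) := by
  simp [thetaMap, antipodeSwap, ← r.eq, tmul_sum]

lemma thetaMap_naturality {X Y : Type u} [AddCommGroup X] [Module k X] [AddCommGroup Y]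
    [Module k Y] (f : X →ₗ[k] Y) :
    thetaMap k U Y ∘ₗ map (map LinearMap.id f) LinearMap.id =
      map LinearMap.id (map f LinearMap.id) ∘ₗ thetaMap k U X := by
  ext u x v
  simp [thetaMap_tmul _ _ (ℛ k v)]

lemma thetaMap_comp_muMap (X : Type u) [AddCommGroup X] [Module k X] :
    thetaMap k U X ∘ₗ muMap k U (U ⊗[k] X) =
      map LinearMap.id (muMap k U X) ∘ₗ thetaMap k U (X ⊗[k] U) ∘ₗ
        map (thetaMap k U X) LinearMap.id := by
  ext u x v w
  simp [muMap, thetaMap_tmul _ _ ((ℛ k v).mul (ℛ k w)), thetaMap_tmul _ _ (ℛ k v),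
    thetaMap_tmul _ _ (ℛ k w), Finset.sum_product, antipode_mul_antidistrib, mul_assoc, sum_tmul]

lemma thetaMap_comp_etaMap (X : Type u) [AddCommGroup X] [Module k X] :
    thetaMap k U X ∘ₗ etaMap k U (U ⊗[k] X) = map LinearMap.id (etaMap k U X) := by
  ext u x
  simp [etaMap, thetaMap, antipodeSwap, Algebra.TensorProduct.one_def]

lemma deltaMap_comp_thetaMap (X : Type u) [AddCommGroup X] [Module k X] :
    deltaMap k U (X ⊗[k] U) ∘ₗ thetaMap k U X =
      map LinearMap.id (thetaMap k U X) ∘ₗ thetaMap k U (U ⊗[k] X) ∘ₗ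
        map (deltaMap k U X) LinearMap.id := by
  ext u x v
  set r := ℛ k v
  -- Right multiplication by `Δ u`, tensored with `x`, turns the identity
  -- `Δ(S v₍₂₎) ⊗ v₍₁₎ = S(v₍₃₎) ⊗ S(v₍₂₎) ⊗ v₍₁₎` into the two sides of the goal.
  have key := congr(((TensorProduct.assoc k U U (X ⊗[k] U)).toLinearMap ∘ₗ
      map (LinearMap.mulRight k (comul u)) (TensorProduct.mk k X U x))
    $(sum_comul_antipode_right_tmul_left r (fun i => ℛ k (r.left i))))
  simp only [← (ℛ k u).eq, map_sum, LinearMap.coe_comp, LinearEquiv.coe_coe, Function.comp_apply,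
    map_tmul, LinearMap.mulRight_apply, mk_apply, deltaMap, AlgebraTensorModule.curry_apply,
    LinearMap.restrictScalars_self, curry_apply, thetaMap_tmul _ _ r, Bialgebra.comul_mul,
    LinearMap.id_coe, id_eq, sum_tmul, assoc_tmul] at key ⊢
  rw [key, Finset.sum_comm]
  simp only [Finset.mul_sum, Algebra.TensorProduct.tmul_mul_tmul, sum_tmul, map_sum, assoc_tmul,
    thetaMap_tmul _ _ (ℛ k (r.left _)), tmul_sum]
  exact Finset.sum_congr rfl fun i _ => Finset.sum_comm

lemma epsMap_comp_thetaMap (X : Type u) [AddCommGroup X] [Module k X] :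
    epsMap k U (X ⊗[k] U) ∘ₗ thetaMap k U X = map (epsMap k U X) LinearMap.id := by
  ext u x v
  simp only [epsMap, AlgebraTensorModule.curry_apply, LinearMap.restrictScalars_self, curry_apply,
    LinearMap.coe_comp, LinearEquiv.coe_coe, Function.comp_apply, thetaMap_tmul _ _ (ℛ k v),
    map_sum, map_tmul, Bialgebra.counit_mul, counit_antipode, LinearMap.id_coe, id_eq, lid_tmul]
  simp only [mul_comm _ (counit u), mul_smul, ← tmul_smul, ← Finset.smul_sum, ← tmul_sum,
    sum_counit_right_smul, smul_tmul]

variable (k U)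

theorem theta_isMixedDistLaw :
    -- naturality in `X`:
    (∀ (X Y : Type u) [AddCommGroup X] [Module k X] [AddCommGroup Y] [Module k Y]
        (f : X →ₗ[k] Y),
      thetaMap k U Y ∘ₗ
          (TensorProduct.map (TensorProduct.map LinearMap.id f) LinearMap.id) =
        (TensorProduct.map LinearMap.id (TensorProduct.map f LinearMap.id)) ∘ₗ
          thetaMap k U X) ∧
    -- compatibility with the multiplication of `B`:
    (∀ (X : Type u) [AddCommGroup X] [Module k X],
      thetaMap k U X ∘ₗ muMap k U (U ⊗[k] X) =
        (TensorProduct.map LinearMap.id (muMap k U X)) ∘ₗ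
          thetaMap k U (X ⊗[k] U) ∘ₗ
            (TensorProduct.map (thetaMap k U X) LinearMap.id)) ∧
    -- compatibility with the unit of `B`:
    (∀ (X : Type u) [AddCommGroup X] [Module k X],
      thetaMap k U X ∘ₗ etaMap k U (U ⊗[k] X) =
        TensorProduct.map LinearMap.id (etaMap k U X)) ∧
    -- compatibility with the comultiplication of `D`:
    (∀ (X : Type u) [AddCommGroup X] [Module k X],
      deltaMap k U (X ⊗[k] U) ∘ₗ thetaMap k U X =
        (TensorProduct.map LinearMap.id (thetaMap k U X)) ∘ₗ
          thetaMap k U (U ⊗[k] X) ∘ₗ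
            (TensorProduct.map (deltaMap k U X) LinearMap.id)) ∧
    -- compatibility with the counit of `D`:
    (∀ (X : Type u) [AddCommGroup X] [Module k X],
      epsMap k U (X ⊗[k] U) ∘ₗ thetaMap k U X =
        TensorProduct.map (epsMap k U X) LinearMap.id) :=
  ⟨fun _ _ _ _ _ _ f => thetaMap_naturality f, thetaMap_comp_muMap, thetaMap_comp_etaMap,
    deltaMap_comp_thetaMap, epsMap_comp_thetaMap⟩

end BohmStefan
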